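/- arXiv:1811.04885 — 4 statements merged into one kernel-verified Lean document; each statement's English description precedes it below -/
import Mathlib

section
/- For set partitions π of [n] and σ of [m], the elementary symmetric function in non-commuting variables satisfies e_{π|σ} = e_π · e_σ, where π|σ is the set partition of [n+m] consisting of the blocks of π together with the blocks of σ shifted up by n. -/
open scoped Classical

/-- Formal power series in the non-commuting variables `x 0, x 1, x 2, …` over `ℚ`,
represented by their coefficient function on words. -/
abbrev NCS : Type := List ℕ → ℚ

/-- Product of two series in non-commuting variables (Cauchy product on words). -/
noncomputable def ncMul (f g : NCS) : NCS := fun w =>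
  ∑ i ∈ Finset.range (w.length + 1), f (w.take i) * g (w.drop i)

/-- The setoid on a sum type whose classes are the classes of `π` together with
the classes of `σ`. -/
def sumSetoid {α β : Type*} (π : Setoid α) (σ : Setoid β) : Setoid (α ⊕ β) where
  r x y := Sum.LiftRel π.r σ.r x y
  iseqv := by
    constructor
    · intro x; cases x
      · exact Sum.LiftRel.inl (π.iseqv.refl _)
      · exact Sum.LiftRel.inr (σ.iseqv.refl _)
    · intro x y h; cases h
      · exact Sum.LiftRel.inl (π.iseqv.symm ‹_›)
      · exact Sum.LiftRel.inr (σ.iseqv.symm ‹_›)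
    · intro x y z h1 h2
      cases h1 <;> cases h2
      · exact Sum.LiftRel.inl (π.iseqv.trans ‹_› ‹_›)
      · exact Sum.LiftRel.inr (σ.iseqv.trans ‹_› ‹_›)

/-- The set partition `π|σ` of `[n+m]`: the blocks of `π` together with the blocks of `σ`
shifted up by `n`. -/
def concatSP {n m : ℕ} (π : Setoid (Fin n)) (σ : Setoid (Fin m)) : Setoid (Fin (n + m)) :=
  Setoid.comap (fun a => finSumFinEquiv.symm a) (sumSetoid π σ)

/-- The elementary symmetric function in non-commuting variables indexed by a set partition
(setoid) `π` of `[n]`: the sum of all words `x_{i_1} ⋯ x_{i_n}` such that `i_j ≠ i_k`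
whenever `j ≠ k` lie in the same block of `π`. -/
noncomputable def eSP (n : ℕ) (π : Setoid (Fin n)) : NCS := fun w =>
  if h : w.length = n then
    (if ∀ j k : Fin n, j ≠ k → π.r j k →
        w.get (Fin.cast h.symm j) ≠ w.get (Fin.cast h.symm k) then 1 else 0)
  else 0

theorem eSP_eq_zero {k : ℕ} (τ : Setoid (Fin k)) {l : List ℕ} (h : l.length ≠ k) :
    eSP k τ l = 0 := by
  rw [eSP, dif_neg h]

/-- `e_{π|σ} = e_π · e_σ` in non-commuting variables. -/
theorem elementary_multiplicative (n m : ℕ) (π : Setoid (Fin n)) (σ : Setoid (Fin m)) :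
    eSP (n + m) (concatSP π σ) = ncMul (eSP n π) (eSP m σ) := by
  funext w
  by_cases hw : w.length = n + m
  · have hn : n ∈ Finset.range (w.length + 1) := by rw [Finset.mem_range]; omega
    rw [show ncMul (eSP n π) (eSP m σ) w =
        ∑ i ∈ Finset.range (w.length + 1), eSP n π (w.take i) * eSP m σ (w.drop i) from rfl,
      Finset.sum_eq_single_of_mem n hn]
    · have htake : (w.take n).length = n := by rw [List.length_take]; omega
      have hdrop : (w.drop n).length = m := by rw [List.length_drop]; omega
      rw [eSP, eSP, eSP, dif_pos hw, dif_pos htake, dif_pos hdrop]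
      have key : (∀ j k : Fin (n+m), j ≠ k → (concatSP π σ).r j k →
          w.get (Fin.cast hw.symm j) ≠ w.get (Fin.cast hw.symm k)) ↔
          ((∀ j k : Fin n, j ≠ k → π.r j k →
            (w.take n).get (Fin.cast htake.symm j) ≠ (w.take n).get (Fin.cast htake.symm k)) ∧
           (∀ j k : Fin m, j ≠ k → σ.r j k →
            (w.drop n).get (Fin.cast hdrop.symm j) ≠ (w.drop n).get (Fin.cast hdrop.symm k))) := by
        constructor
        · intro P
          constructor
          · intro j k hjk hr
            have hne : (Fin.castAdd m j) ≠ (Fin.castAdd m k) := by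
              intro h; apply hjk; ext
              simpa using congrArg Fin.val h
            have := P (Fin.castAdd m j) (Fin.castAdd m k) hne
              (by
                show Sum.LiftRel π.r σ.r _ _
                simp only [finSumFinEquiv_symm_apply_castAdd]
                exact Sum.LiftRel.inl hr)
            simpa [List.get_eq_getElem, List.getElem_take] using this
          · intro j k hjk hr
            have hne : (Fin.natAdd n j) ≠ (Fin.natAdd n k) := by
              intro h; apply hjk; ext
              have := congrArg Fin.val h
              simp only [Fin.coe_natAdd] at this; omega
            have := P (Fin.natAdd n j) (Fin.natAdd n k) hne
              (by
                show Sum.LiftRel π.r σ.r _ _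
                simp only [finSumFinEquiv_symm_apply_natAdd]
                exact Sum.LiftRel.inr hr)
            simpa [List.get_eq_getElem, List.getElem_drop] using this
        · rintro ⟨Q, R⟩ j k hjk hr
          have hr' : Sum.LiftRel π.r σ.r (finSumFinEquiv.symm j) (finSumFinEquiv.symm k) := hr
          rcases hj : finSumFinEquiv.symm j with a | a <;>
            rcases hk : finSumFinEquiv.symm k with b | b <;> rw [hj, hk] at hr'
          · have hab : π.r a b := by cases hr' with | inl h => exact h
            have hja : j = Fin.castAdd m a := by
              rw [← finSumFinEquiv_apply_left, ← hj, Equiv.apply_symm_apply]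
            have hkb : k = Fin.castAdd m b := by
              rw [← finSumFinEquiv_apply_left, ← hk, Equiv.apply_symm_apply]
            subst hja; subst hkb
            have hab' : a ≠ b := by
              intro h; exact hjk (by rw [h])
            have := Q a b hab' hab
            simp only [List.get_eq_getElem, List.getElem_take] at this
            simpa [List.get_eq_getElem] using this
          · cases hr'
          · cases hr'
          · have hab : σ.r a b := by cases hr' with | inr h => exact h
            have hja : j = Fin.natAdd n a := by
              rw [← finSumFinEquiv_apply_right, ← hj, Equiv.apply_symm_apply]
            have hkb : k = Fin.natAdd n b := by
              rw [← finSumFinEquiv_apply_right, ← hk, Equiv.apply_symm_apply]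
            subst hja; subst hkb
            have hab' : a ≠ b := by
              intro h; exact hjk (by rw [h])
            have := R a b hab' hab
            simp only [List.get_eq_getElem, List.getElem_drop] at this
            simpa [List.get_eq_getElem] using this
      rw [if_congr key rfl rfl]
      split_ifs with h h1 h2 <;>
        simp only [mul_one, mul_zero, one_mul, zero_mul] <;>
        first | rfl | (exfalso; tauto)
    · intro i hi hne
      rw [Finset.mem_range] at hi
      by_cases ht : (w.take i).length = n
      · have : (w.drop i).length ≠ m := by
          rw [List.length_take] at ht
          rw [List.length_drop]
          omega
        rw [eSP_eq_zero σ this, mul_zero]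
      · simp only [eSP]
        rw [dif_neg ht, zero_mul]
  · rw [eSP, dif_neg hw,
      show ncMul (eSP n π) (eSP m σ) w =
        ∑ i ∈ Finset.range (w.length + 1), eSP n π (w.take i) * eSP m σ (w.drop i) from rfl]
    symm
    apply Finset.sum_eq_zero
    intro i hi
    rw [Finset.mem_range] at hi
    by_cases ht : (w.take i).length = n
    · have : (w.drop i).length ≠ m := by
        rw [List.length_take] at ht
        rw [List.length_drop]
        omega
      rw [eSP_eq_zero σ this, mul_zero]
    · rw [eSP_eq_zero π ht, zero_mul]
end

section
/- Define an equivalence on set partitions of [n]: π ∼ σ iff λ(π) = λ(σ) and the block of π containing n has the same size as the block of σ containing n. Define f ≡_n g for linear combinations of {e_π : π ⊢ [n]} iff for every equivalence class the sums of coefficients agree. Then: if π, σ ⊢ [n−1] with π ∼ σ, then π/n ∼ σ/n and π⊕_{n−1}n ∼ σ⊕_{n−1}n; consequently, if f ≡_{n−1} g then f↑_{n−1}^n ≡_n g↑_{n−1}^n, given that e_τ↑_{n−1}^n ≡_n (1/b)(e_{τ/n} − e_{τ⊕_{n−1}n}) for any τ ⊢ [n−1] with b the size of the block of τ containing n−1.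 -/
open scoped Classical

/-- `π/n`: add a new largest element as a singleton block. -/
def addSingleton {n : ℕ} (π : Setoid (Fin n)) : Setoid (Fin (n + 1)) :=
  concatSP π (⊥ : Setoid (Fin 1))

/-- `π ⊕_j n`: insert the new largest element into the block containing `j`. -/
def oplus {m : ℕ} (π : Setoid (Fin m)) (j : Fin m) : Setoid (Fin (m + 1)) :=
  Setoid.comap (fun x : Fin (m + 1) => if h : (x : ℕ) < m then ⟨x, h⟩ else j) π

/-- `λ(π)`: the multiset of block sizes of a set partition (setoid) of `[n]`. -/
noncomputable def blockSizes {n : ℕ} (π : Setoid (Fin n)) : Multiset ℕ :=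
  ((Finset.univ.image fun x : Fin n => Finset.univ.filter fun y => π.r x y).val).map
    Finset.card

/-- The size of the block containing the largest element. -/
noncomputable def lastBlockSize {k : ℕ} (π : Setoid (Fin (k + 1))) : ℕ :=
  (Finset.univ.filter fun x => π.r x (Fin.last k)).card

/-- The equivalence `π ∼ σ`: same multiset of block sizes and the blocks containing the
largest element have the same size. -/
noncomputable def sim {k : ℕ} (π σ : Setoid (Fin (k + 1))) : Prop :=
  blockSizes π = blockSizes σ ∧ lastBlockSize π = lastBlockSize σ

/-- `f ≡_n g` for coefficient vectors (in the `e`-basis of NCSym): for every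
`∼`-equivalence class the sums of coefficients agree. -/
noncomputable def equivN {k : ℕ} (c c' : Setoid (Fin (k + 1)) → ℚ) : Prop :=
  ∀ τ, (∑ᶠ σ ∈ {σ | sim σ τ}, c σ) = ∑ᶠ σ ∈ {σ | sim σ τ}, c' σ

/-- The coefficient vector of `f↑_{n-1}^n`, computed via the inducing formula
`e_τ↑_{n-1}^n ≡_n (1/b)(e_{τ/n} − e_{τ⊕_{n-1}n})`, where `b` is the size of the block
of `τ` containing `n−1`. -/
noncomputable def inducedCoeff {m : ℕ} (c : Setoid (Fin (m + 1)) → ℚ) :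
    Setoid (Fin (m + 2)) → ℚ := fun ρ =>
  (∑ᶠ τ ∈ {τ : Setoid (Fin (m + 1)) | addSingleton τ = ρ}, c τ / (lastBlockSize τ : ℚ)) -
  (∑ᶠ τ ∈ {τ : Setoid (Fin (m + 1)) | oplus τ (Fin.last m) = ρ}, c τ / (lastBlockSize τ : ℚ))

/-!
Adding `n` as a singleton adds a part of size `1` to `λ` and makes the block of `n` a singleton;
merging `n` into the block of `n - 1`, of size `b`, replaces a part `b` of `λ` by `b + 1` and
makes the block of `n` of size `b + 1`. Both effects depend only on the `∼`-class, hence the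
compatibility.
Summing the inducing formula over a `∼`-class `C` gives
`∑_{τ/n ∈ C} c_τ / b_τ - ∑_{τ⊕n ∈ C} c_τ / b_τ`; both index sets are unions of `∼`-classes and `b_τ`
is constant on them, so each sum is determined by the class sums of `c`.
-/

open Finset Function

theorem Multiset.map_eq_cons_erase_map {α β : Type*} [DecidableEq β] {s : Multiset α}
    (hs : s.Nodup) {a : α} (ha : a ∈ s) {f g : α → β} (hfg : ∀ b ∈ s, b ≠ a → g b = f b) :
    s.map g = g a ::ₘ (s.map f).erase (f a) := by
  classical
  rw [← Multiset.cons_erase ha, Multiset.map_cons, Multiset.map_cons, Multiset.erase_cons_head]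
  congr 1
  refine Multiset.map_congr rfl fun b hb => hfg b (Multiset.mem_of_mem_erase hb) ?_
  exact ((hs.mem_erase_iff).mp hb).1

theorem finsum_mem_finsum_mem_fiber {α β M : Type*} [AddCommMonoid M] [Finite α] {S : Set β}
    (hS : S.Finite) (g : α → β) (f : α → M) :
    ∑ᶠ b ∈ S, ∑ᶠ a ∈ {a | g a = b}, f a = ∑ᶠ a ∈ g ⁻¹' S, f a := by
  rw [← Set.biUnion_preimage_singleton, finsum_mem_biUnion (Set.pairwiseDisjoint_fiber g S) hS
    fun _ _ => Set.toFinite _]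
  rfl

section ClassSums

variable {α R : Type*} [Finite α] [Semiring R] (s : Setoid α) {c c' w : α → R}

theorem finsum_mul_eq_of_finsum_class_eq
    (h : ∀ a, ∑ᶠ b ∈ {b | s b a}, c b = ∑ᶠ b ∈ {b | s b a}, c' b)
    (hw : ∀ a b, s a b → w a = w b) :
    ∑ᶠ a, c a * w a = ∑ᶠ a, c' a * w a := by
  have class_sum : ∀ (d : α → R) (a : α),
      ∑ᶠ b ∈ {b | Quotient.mk s b = Quotient.mk s a}, d b * w b =
        (∑ᶠ b ∈ {b | s b a}, d b) * w a := by
    intro d a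
    simp_rw [Quotient.eq]
    rw [finsum_mem_mul' _ _ (Set.toFinite _)]
    exact finsum_mem_congr rfl fun b hb => by rw [hw b a hb]
  have fiberwise : ∀ d : α → R, ∑ᶠ a, d a * w a =
      ∑ᶠ q : Quotient s, ∑ᶠ b ∈ {b | Quotient.mk s b = q}, d b * w b := fun d => by
    simpa using
      (finsum_mem_finsum_mem_fiber Set.finite_univ (Quotient.mk s) fun a => d a * w a).symm
  rw [fiberwise, fiberwise]
  refine finsum_congr fun q => ?_
  induction q using Quotient.inductionOn with
  | h a => rw [class_sum, class_sum, h]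

theorem finsum_mem_mul_eq_of_finsum_class_eq {T : Set α}
    (h : ∀ a, ∑ᶠ b ∈ {b | s b a}, c b = ∑ᶠ b ∈ {b | s b a}, c' b)
    (hT : ∀ a b, s a b → a ∈ T → b ∈ T) (hw : ∀ a b, s a b → w a = w b) :
    ∑ᶠ a ∈ T, c a * w a = ∑ᶠ a ∈ T, c' a * w a := by
  simp only [finsum_mem_def, Set.indicator_mul_right]
  refine finsum_mul_eq_of_finsum_class_eq s h fun a b hab => ?_
  have hmem : a ∈ T ↔ b ∈ T := ⟨hT a b hab, hT b a (s.symm hab)⟩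
  by_cases ha : a ∈ T
  · rw [Set.indicator_of_mem ha, Set.indicator_of_mem (hmem.mp ha), hw a b hab]
  · rw [Set.indicator_of_notMem ha, Set.indicator_of_notMem (mt hmem.mpr ha)]

end ClassSums

namespace Setoid

variable {α β : Type*} [Fintype α]

noncomputable def block (s : Setoid α) (a : α) : Finset α := univ.filter fun b => s.r a b

noncomputable def blocks [DecidableEq α] (s : Setoid α) : Finset (Finset α) := univ.image s.block

@[simp]
theorem mem_block {s : Setoid α} {a b : α} : b ∈ s.block a ↔ s a b := by
  simp [block]

theorem mem_block_self (s : Setoid α) (a : α) : a ∈ s.block a :=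
  mem_block.mpr (s.refl a)

theorem block_mem_blocks [DecidableEq α] (s : Setoid α) (a : α) : s.block a ∈ s.blocks :=
  mem_image_of_mem _ (mem_univ a)

theorem block_eq_of_mem {s : Setoid α} {a b : α} (h : b ∈ s.block a) : s.block b = s.block a := by
  rw [mem_block] at h
  ext c
  simp only [mem_block]
  exact ⟨s.trans h, s.trans (s.symm h)⟩

theorem eq_block_of_mem_blocks [DecidableEq α] {s : Setoid α} {S : Finset α} {a : α}
    (hS : S ∈ s.blocks) (ha : a ∈ S) : S = s.block a := by
  obtain ⟨b, -, rfl⟩ := mem_image.mp hS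
  exact (block_eq_of_mem ha).symm

theorem block_comap [DecidableEq α] [Fintype β] (f : β → α) (s : Setoid α) (b : β) :
    (s.comap f).block b = ({y | f y ∈ s.block (f b)} : Finset β) := by
  ext
  simp [comap_rel]

theorem blocks_comap [DecidableEq α] [Fintype β] [DecidableEq β] {f : β → α} (hf : Surjective f)
    (s : Setoid α) :
    (s.comap f).blocks = s.blocks.image fun S => ({y | f y ∈ S} : Finset β) := by
  rw [blocks, blocks, image_image, ← image_univ_of_surjective hf, image_image]
  exact image_congr fun b _ => block_comap f s b

omit [Fintype α] in
theorem filter_mem_injective [DecidableEq α] [Fintype β] {f : β → α} (hf : Surjective f) :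
    Injective fun S : Finset α => ({y | f y ∈ S} : Finset β) := by
  intro S T hST
  ext a
  obtain ⟨b, rfl⟩ := hf a
  simpa using congrArg (b ∈ ·) hST

end Setoid

theorem blockSizes_eq_map_card_blocks {n : ℕ} (π : Setoid (Fin n)) :
    blockSizes π = π.blocks.val.map card := rfl

theorem lastBlockSize_eq_card_block {k : ℕ} (π : Setoid (Fin (k + 1))) :
    lastBlockSize π = #(π.block (Fin.last k)) := by
  simp only [lastBlockSize, Setoid.block, π.comm']

section AddSingleton

variable {n : ℕ} (π : Setoid (Fin n))

theorem addSingleton_iff {x y : Fin (n + 1)} :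
    addSingleton π x y ↔
      Sum.LiftRel π (⊥ : Setoid (Fin 1)) (finSumFinEquiv.symm x) (finSumFinEquiv.symm y) :=
  Iff.rfl

theorem addSingleton_castSucc_castSucc {a b : Fin n} :
    addSingleton π a.castSucc b.castSucc ↔ π a b := by
  rw [addSingleton_iff, finSumFinEquiv_symm_apply_castSucc, finSumFinEquiv_symm_apply_castSucc,
    Sum.liftRel_inl_inl]

theorem addSingleton_last_left {x : Fin (n + 1)} :
    addSingleton π (Fin.last n) x ↔ x = Fin.last n := by
  induction x using Fin.lastCases with
  | last => simp only [(addSingleton π).refl]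
  | cast a =>
    rw [addSingleton_iff, finSumFinEquiv_symm_last, finSumFinEquiv_symm_apply_castSucc]
    simp [Fin.castSucc_ne_last]

theorem block_addSingleton_castSucc (a : Fin n) :
    (addSingleton π).block a.castSucc = (π.block a).map Fin.castSuccEmb := by
  ext y
  induction y using Fin.lastCases with
  | last =>
    rw [Setoid.mem_block, Setoid.comm', addSingleton_last_left]
    simp [Fin.castSucc_ne_last]
  | cast b => simp [addSingleton_castSucc_castSucc]

theorem block_addSingleton_last : (addSingleton π).block (Fin.last n) = {Fin.last n} := by
  ext
  simp [addSingleton_last_left]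

theorem singleton_last_notMem_map_castSucc (B : Finset (Finset (Fin n))) :
    {Fin.last n} ∉ B.map (mapEmbedding Fin.castSuccEmb).toEmbedding := by
  intro h
  obtain ⟨S, -, hS⟩ := mem_map.mp h
  have := hS ▸ mem_singleton_self (Fin.last n)
  simp [Fin.castSucc_ne_last] at this

theorem blocks_addSingleton :
    (addSingleton π).blocks = cons {Fin.last n}
      (π.blocks.map (mapEmbedding Fin.castSuccEmb).toEmbedding)
      (singleton_last_notMem_map_castSucc _) := by
  ext S
  simp [Setoid.blocks, Fin.exists_fin_succ', block_addSingleton_castSucc, block_addSingleton_last,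
    eq_comm, or_comm]

theorem blockSizes_addSingleton : blockSizes (addSingleton π) = 1 ::ₘ blockSizes π := by
  rw [blockSizes_eq_map_card_blocks, blocks_addSingleton, cons_val, Multiset.map_cons, map_val,
    Multiset.map_map, card_singleton, blockSizes_eq_map_card_blocks]
  congr 1
  exact Multiset.map_congr rfl fun S _ => by simp

theorem lastBlockSize_addSingleton : lastBlockSize (addSingleton π) = 1 := by
  rw [lastBlockSize_eq_card_block, block_addSingleton_last, card_singleton]

end AddSingleton

namespace Fin

variable {m : ℕ} (j : Fin m)

def collapse (x : Fin (m + 1)) : Fin m :=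
  if h : (x : ℕ) < m then ⟨x, h⟩ else j

@[simp]
theorem collapse_castSucc (a : Fin m) : collapse j a.castSucc = a := by
  simp [collapse]

@[simp]
theorem collapse_last : collapse j (last m) = j := by
  simp [collapse]

theorem collapse_surjective : Surjective (collapse j) :=
  fun a => ⟨a.castSucc, collapse_castSucc j a⟩

theorem card_filter_collapse_mem (S : Finset (Fin m)) :
    #{y | collapse j y ∈ S} = #S + if j ∈ S then 1 else 0 := by
  rw [card_filter, sum_univ_castSucc]
  simp only [collapse_castSucc, collapse_last, ← card_filter, filter_univ_mem]

end Fin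

section Oplus

variable {m : ℕ} (π : Setoid (Fin m)) (j : Fin m)

theorem oplus_eq_comap : oplus π j = π.comap (Fin.collapse j) := rfl

theorem blockSizes_oplus :
    blockSizes (oplus π j) = (#(π.block j) + 1) ::ₘ (blockSizes π).erase #(π.block j) := by
  rw [blockSizes_eq_map_card_blocks, oplus_eq_comap,
    Setoid.blocks_comap (Fin.collapse_surjective j),
    image_val_of_injOn (Setoid.filter_mem_injective (Fin.collapse_surjective j)).injOn,
    Multiset.map_map, blockSizes_eq_map_card_blocks,
    Multiset.map_eq_cons_erase_map π.blocks.nodup (π.block_mem_blocks j) (f := card)]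
  · rw [comp_apply, Fin.card_filter_collapse_mem, if_pos (π.mem_block_self j)]
  · intro S hS hne
    have hj : j ∉ S := fun hj => hne (Setoid.eq_block_of_mem_blocks hS hj)
    simp [Fin.card_filter_collapse_mem, hj]

theorem lastBlockSize_oplus : lastBlockSize (oplus π j) = #(π.block j) + 1 := by
  rw [lastBlockSize_eq_card_block, oplus_eq_comap, Setoid.block_comap, Fin.collapse_last,
    Fin.card_filter_collapse_mem, if_pos (π.mem_block_self j)]

end Oplus

instance Setoid.finite {α : Type*} [Finite α] : Finite (Setoid α) :=
  Finite.of_injective (fun s : Setoid α => s.r) fun _ _ h =>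
    Setoid.ext fun a b => Iff.of_eq (congrFun (congrFun h a) b)

section Sim

variable {k : ℕ}

noncomputable def simSetoid (k : ℕ) : Setoid (Setoid (Fin (k + 1))) where
  r := sim
  iseqv := ⟨fun _ => ⟨rfl, rfl⟩, fun h => ⟨h.1.symm, h.2.symm⟩,
    fun h h' => ⟨h.1.trans h'.1, h.2.trans h'.2⟩⟩

theorem sim_addSingleton {π σ : Setoid (Fin (k + 1))} (h : sim π σ) :
    sim (addSingleton π) (addSingleton σ) :=
  ⟨by rw [blockSizes_addSingleton, blockSizes_addSingleton, h.1],
    by rw [lastBlockSize_addSingleton, lastBlockSize_addSingleton]⟩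

theorem sim_oplus_last {π σ : Setoid (Fin (k + 1))} (h : sim π σ) :
    sim (oplus π (Fin.last k)) (oplus σ (Fin.last k)) := by
  have hlast := h.2
  rw [lastBlockSize_eq_card_block, lastBlockSize_eq_card_block] at hlast
  exact ⟨by rw [blockSizes_oplus, blockSizes_oplus, h.1, hlast],
    by rw [lastBlockSize_oplus, lastBlockSize_oplus, hlast]⟩

theorem finsum_mem_inducedCoeff (c : Setoid (Fin (k + 1)) → ℚ) (S : Set (Setoid (Fin (k + 2)))) :
    ∑ᶠ ρ ∈ S, inducedCoeff c ρ =
      ∑ᶠ τ ∈ addSingleton ⁻¹' S, c τ * (lastBlockSize τ : ℚ)⁻¹ -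
        ∑ᶠ τ ∈ (oplus · (Fin.last k)) ⁻¹' S, c τ * (lastBlockSize τ : ℚ)⁻¹ := by
  simp only [inducedCoeff, ← div_eq_mul_inv]
  rw [finsum_mem_sub_distrib _ _ (Set.toFinite S), finsum_mem_finsum_mem_fiber (Set.toFinite S),
    finsum_mem_finsum_mem_fiber (Set.toFinite S)]

theorem equivN_inducedCoeff {c c' : Setoid (Fin (k + 1)) → ℚ} (h : equivN c c') :
    equivN (inducedCoeff c) (inducedCoeff c') := by
  intro τ
  have weight_eq : ∀ π σ, simSetoid k π σ →
      (lastBlockSize π : ℚ)⁻¹ = (lastBlockSize σ : ℚ)⁻¹ := fun _ _ hπσ => by rw [hπσ.2]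
  have preimage_sum_eq : ∀ g : Setoid (Fin (k + 1)) → Setoid (Fin (k + 2)),
      (∀ π σ, sim π σ → sim (g π) (g σ)) →
        ∑ᶠ π ∈ g ⁻¹' {ρ | sim ρ τ}, c π * (lastBlockSize π : ℚ)⁻¹ =
          ∑ᶠ π ∈ g ⁻¹' {ρ | sim ρ τ}, c' π * (lastBlockSize π : ℚ)⁻¹ := fun g hg =>
    finsum_mem_mul_eq_of_finsum_class_eq (simSetoid k) h
      (fun π σ hπσ hπ => (simSetoid _).trans (hg σ π ((simSetoid k).symm hπσ)) hπ) weight_eq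
  rw [finsum_mem_inducedCoeff, finsum_mem_inducedCoeff,
    preimage_sum_eq _ fun _ _ => sim_addSingleton, preimage_sum_eq _ fun _ _ => sim_oplus_last]

end Sim

/-- If `π ∼ σ` then `π/n ∼ σ/n` and `π⊕_{n−1}n ∼ σ⊕_{n−1}n`; consequently
`f ≡_{n−1} g` implies `f↑_{n−1}^n ≡_n g↑_{n−1}^n`. -/
theorem sim_compatible_and_induce (m : ℕ) :
    (∀ π σ : Setoid (Fin (m + 1)), sim π σ → sim (addSingleton π) (addSingleton σ)) ∧
    (∀ π σ : Setoid (Fin (m + 1)), sim π σ →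
      sim (oplus π (Fin.last m)) (oplus σ (Fin.last m))) ∧
    (∀ c c' : Setoid (Fin (m + 1)) → ℚ, equivN c c' →
      equivN (inducedCoeff c) (inducedCoeff c')) :=
  ⟨fun _ _ => sim_addSingleton, fun _ _ => sim_oplus_last, fun _ _ => equivN_inducedCoeff⟩
end

section
/- Every arc diagram D on n ≥ 2 vertices in which every vertex has at most one left arc and every arc has length 1 or 2 (the length of arc (i,j) is j−i) decomposes uniquely as a concatenation D = D_1 · D_2 ⋯ D_k, where each D_i is either an interlacing diagram L_m (arcs (t,t+2) for all possible t on m+1 vertices, m ≥ 1) or an interconnecting diagram C_m (an interlacing diagram on m+1 vertices plus the arc (1,2), m ≥ 1). -/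
/-- The underlying arc set of a factor: `(false, m)` is the interlacing diagram `L_m`
on `m+1` vertices `0, …, m` with arcs `(t, t+2)` for `0 ≤ t ≤ m−2`; `(true, m)` is the
interconnecting diagram `C_m`, which is `L_m` together with the arc `(0,1)`. -/
def diagOf : Bool × ℕ → Finset (ℕ × ℕ)
  | (false, m) => (Finset.range (m - 1)).image fun t => (t, t + 2)
  | (true, m) => insert (0, 1) ((Finset.range (m - 1)).image fun t => (t, t + 2))

/-- Shift all arcs of a diagram to the right by `k`. -/
def shiftArcs (k : ℕ) (A : Finset (ℕ × ℕ)) : Finset (ℕ × ℕ) :=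
  A.image fun p => (p.1 + k, p.2 + k)

/-- The concatenation of a list of factors: each factor `(b, m)` has length `m`
(occupying `m+1` vertices, the last of which is shared with the next factor). -/
def concatList : List (Bool × ℕ) → Finset (ℕ × ℕ)
  | [] => ∅
  | f :: rest => diagOf f ∪ shiftArcs f.2 (concatList rest)


/-!
Reading the diagram from the left, let `m - 1` be the first `t` with `(t, t+2)` missing.
Since no vertex has two left arcs, an arc `(i, i+1)` with `0 < i < m` would clash with
`(i-1, i+1)`, so before vertex `m` the diagram is `L_m` or `C_m`, according to whether
`(0, 1)` is an arc, and no arc crosses vertex `m`. The arcs to the right of `m` form a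
diagram of the same kind on `n - m` vertices, which gives existence by induction. The same
three pieces of data (`m`, the presence of `(0, 1)`, and the part right of `m`) can be read
off any concatenation, which gives uniqueness.
-/
structure IsShortArcDiagram (n : ℕ) (A : Finset (ℕ × ℕ)) : Prop where
  valid : ∀ p ∈ A, p.1 < p.2 ∧ p.2 < n ∧ p.2 - p.1 ≤ 2
  snd_inj : ∀ p ∈ A, ∀ q ∈ A, p.2 = q.2 → p = q

def dropArcs (m : ℕ) (A : Finset (ℕ × ℕ)) : Finset (ℕ × ℕ) :=
  (A.filter fun p => m ≤ p.1).image fun p => (p.1 - m, p.2 - m)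

lemma mem_diagOf_iff {b : Bool} {m : ℕ} {p : ℕ × ℕ} :
    p ∈ diagOf (b, m) ↔ (b = true ∧ p = (0, 1)) ∨ ∃ t < m - 1, p = (t, t + 2) := by
  cases b <;> simp [diagOf, eq_comm]

lemma fst_lt_of_mem_diagOf {b : Bool} {m : ℕ} {p : ℕ × ℕ} (hm : 1 ≤ m)
    (hp : p ∈ diagOf (b, m)) : p.1 < m := by
  obtain ⟨-, rfl⟩ | ⟨t, ht, rfl⟩ := mem_diagOf_iff.1 hp <;> simp <;> omega

lemma mem_shiftArcs {k : ℕ} {A : Finset (ℕ × ℕ)} {p : ℕ × ℕ} :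
    p ∈ shiftArcs k A ↔ ∃ q ∈ A, p = (q.1 + k, q.2 + k) := by
  simp [shiftArcs, eq_comm]

lemma dropArcs_union (m : ℕ) (A B : Finset (ℕ × ℕ)) :
    dropArcs m (A ∪ B) = dropArcs m A ∪ dropArcs m B := by
  simp [dropArcs, Finset.filter_union, Finset.image_union]

lemma dropArcs_shiftArcs (m : ℕ) (A : Finset (ℕ × ℕ)) : dropArcs m (shiftArcs m A) = A := by
  simp [dropArcs, shiftArcs, Finset.filter_image, Finset.image_image, Function.comp_def]

lemma dropArcs_eq_empty {m : ℕ} {A : Finset (ℕ × ℕ)} (h : ∀ p ∈ A, p.1 < m) :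
    dropArcs m A = ∅ := by
  simpa [dropArcs, Finset.filter_eq_empty_iff] using h

lemma shiftArcs_dropArcs {m : ℕ} {A : Finset (ℕ × ℕ)} (h : ∀ p ∈ A, p.1 ≤ p.2) :
    shiftArcs m (dropArcs m A) = A.filter fun p => m ≤ p.1 := by
  rw [dropArcs, shiftArcs, Finset.image_image]
  refine (Finset.image_congr fun p hp => ?_).trans Finset.image_id'
  obtain ⟨hpA, hmp⟩ := Finset.mem_filter.1 hp
  have := h p hpA
  ext <;> simp <;> omega

lemma dropArcs_concatList_cons (b : Bool) {m : ℕ} (hm : 1 ≤ m) (r : List (Bool × ℕ)) :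
    dropArcs m (concatList ((b, m) :: r)) = concatList r := by
  rw [concatList, dropArcs_union, dropArcs_shiftArcs,
    dropArcs_eq_empty fun p hp => fst_lt_of_mem_diagOf hm hp, Finset.empty_union]

lemma mem_concatList_cons_of_lt {b : Bool} {m t : ℕ} (r : List (Bool × ℕ)) (ht : t < m - 1) :
    (t, t + 2) ∈ concatList ((b, m) :: r) :=
  Finset.mem_union_left _ (mem_diagOf_iff.2 (Or.inr ⟨t, ht, rfl⟩))

lemma notMem_concatList_cons {b : Bool} {m : ℕ} (r : List (Bool × ℕ)) (hm : 1 ≤ m) :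
    (m - 1, m - 1 + 2) ∉ concatList ((b, m) :: r) := by
  simp only [concatList, Finset.mem_union, mem_diagOf_iff, mem_shiftArcs, Prod.ext_iff]
  omega

lemma zero_one_mem_concatList_cons_iff {b : Bool} {m : ℕ} (r : List (Bool × ℕ)) (hm : 1 ≤ m) :
    (0, 1) ∈ concatList ((b, m) :: r) ↔ b = true := by
  simp only [concatList, Finset.mem_union, mem_diagOf_iff, mem_shiftArcs, Prod.ext_iff]
  constructor
  · rintro ((⟨hb, -⟩ | ⟨t, -, h0, h1⟩) | ⟨q, -, h0, -⟩)
    exacts [hb, by omega, by omega]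
  · exact fun hb => Or.inl (Or.inl ⟨hb, trivial⟩)

lemma concatList_cons_inj {b b' : Bool} {m m' : ℕ} {r r' : List (Bool × ℕ)} (hm : 1 ≤ m)
    (hm' : 1 ≤ m') (h : concatList ((b, m) :: r) = concatList ((b', m') :: r')) :
    b = b' ∧ m = m' ∧ concatList r = concatList r' := by
  obtain rfl : m = m' := by
    have : ¬ m - 1 < m' - 1 := fun hlt =>
      notMem_concatList_cons r hm (h ▸ mem_concatList_cons_of_lt r' hlt)
    have : ¬ m' - 1 < m - 1 := fun hlt =>
      notMem_concatList_cons r' hm' (h ▸ mem_concatList_cons_of_lt r hlt)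
    omega
  refine ⟨?_, rfl, ?_⟩
  · rw [Bool.eq_iff_iff, ← zero_one_mem_concatList_cons_iff r hm, h,
      zero_one_mem_concatList_cons_iff r' hm]
  · rw [← dropArcs_concatList_cons b hm r, h, dropArcs_concatList_cons b' hm r']

theorem eq_of_concatList_eq {fs gs : List (Bool × ℕ)} (hfs : ∀ f ∈ fs, 1 ≤ f.2)
    (hgs : ∀ g ∈ gs, 1 ≤ g.2) (hsum : (fs.map Prod.snd).sum = (gs.map Prod.snd).sum)
    (h : concatList fs = concatList gs) : fs = gs := by
  induction fs generalizing gs with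
  | nil =>
    cases gs with
    | nil => rfl
    | cons g gs => have := hgs g (by simp); simp only [List.map_cons, List.sum_cons, List.map_nil, List.sum_nil] at hsum; omega
  | cons f fs ih =>
    cases gs with
    | nil => have := hfs f (by simp); simp only [List.map_cons, List.sum_cons, List.map_nil, List.sum_nil] at hsum; omega
    | cons g gs =>
      obtain ⟨b, m⟩ := f
      obtain ⟨b', m'⟩ := g
      obtain ⟨rfl, rfl, hr⟩ :=
        concatList_cons_inj (hfs _ List.mem_cons_self) (hgs _ List.mem_cons_self) h
      simp only [List.map_cons, List.sum_cons, Nat.add_left_cancel_iff] at hsum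
      rw [ih (fun f hf => hfs f (List.mem_cons_of_mem _ hf))
        (fun g hg => hgs g (List.mem_cons_of_mem _ hg)) hsum hr]

namespace IsShortArcDiagram

variable {n : ℕ} {A : Finset (ℕ × ℕ)}

lemma eq_empty (hA : IsShortArcDiagram n A) (hn : n ≤ 1) : A = ∅ :=
  Finset.eq_empty_of_forall_notMem fun p hp => by have := hA.valid p hp; omega

lemma drop (hA : IsShortArcDiagram n A) (m : ℕ) : IsShortArcDiagram (n - m) (dropArcs m A) where
  valid := by
    simp only [dropArcs, Finset.mem_image, Finset.mem_filter]
    rintro _ ⟨p, ⟨hp, hmp⟩, rfl⟩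
    have := hA.valid p hp
    omega
  snd_inj := by
    simp only [dropArcs, Finset.mem_image, Finset.mem_filter]
    rintro _ ⟨p, ⟨hp, hmp⟩, rfl⟩ _ ⟨q, ⟨hq, hmq⟩, rfl⟩ hpq
    have := hA.valid p hp
    have := hA.valid q hq
    rw [hA.snd_inj p hp q hq (by dsimp only at hpq; omega)]

lemma filter_fst_lt_eq_diagOf (hA : IsShortArcDiagram n A) {t : ℕ}
    (hmem : ∀ s < t, (s, s + 2) ∈ A) (hnot : (t, t + 2) ∉ A) :
    A.filter (fun p => p.1 < t + 1) = diagOf (decide ((0, 1) ∈ A), t + 1) := by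
  ext ⟨i, j⟩
  simp only [Finset.mem_filter, mem_diagOf_iff, decide_eq_true_eq, Prod.ext_iff,
    add_tsub_cancel_right]
  constructor
  · rintro ⟨hp, hi⟩
    have := hA.valid _ hp
    obtain rfl | rfl : j = i + 1 ∨ j = i + 2 := by omega
    · obtain rfl | hi0 := Nat.eq_zero_or_pos i
      · exact Or.inl ⟨hp, rfl, rfl⟩
      -- `(i, i + 1)` and `(i - 1, i + 1)` would be two left arcs of `i + 1`
      have := hA.snd_inj _ (hmem (i - 1) (by omega)) _ hp (by dsimp only; omega)
      rw [Prod.mk.injEq] at this; omega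
    · have : i ≠ t := by rintro rfl; exact hnot hp
      exact Or.inr ⟨i, by omega, rfl, rfl⟩
  · rintro (⟨hp, rfl, rfl⟩ | ⟨s, hs, rfl, rfl⟩)
    · exact ⟨hp, by omega⟩
    · exact ⟨hmem _ hs, by omega⟩

lemma eq_diagOf_union_shiftArcs (hA : IsShortArcDiagram n A) {t : ℕ}
    (hmem : ∀ s < t, (s, s + 2) ∈ A) (hnot : (t, t + 2) ∉ A) :
    A = diagOf (decide ((0, 1) ∈ A), t + 1) ∪ shiftArcs (t + 1) (dropArcs (t + 1) A) := by
  rw [← hA.filter_fst_lt_eq_diagOf hmem hnot,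
    shiftArcs_dropArcs fun p hp => (hA.valid p hp).1.le]
  simp only [← not_lt, Finset.filter_union_filter_not_eq]

theorem exists_concatList_eq (hA : IsShortArcDiagram n A) :
    ∃ fs : List (Bool × ℕ),
      (∀ f ∈ fs, 1 ≤ f.2) ∧ (fs.map Prod.snd).sum = n - 1 ∧ A = concatList fs := by
  induction n using Nat.strong_induction_on generalizing A with
  | _ n ih =>
  rcases le_or_gt n 1 with hn | hn
  · exact ⟨[], by simp, by simp only [List.map_nil, List.sum_nil]; omega, by simp [concatList, hA.eq_empty hn]⟩
  have hex : ∃ t, (t, t + 2) ∉ A := ⟨n - 2, fun h => by have := hA.valid _ h; omega⟩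
  set t := Nat.find hex
  have htn : t ≤ n - 2 := Nat.find_min' hex fun h => by have := hA.valid _ h; omega
  obtain ⟨fs, hfs, hsum, hrest⟩ := ih (n - (t + 1)) (by omega) (hA.drop (t + 1))
  refine ⟨(decide ((0, 1) ∈ A), t + 1) :: fs, ?_, ?_, ?_⟩
  · simpa using hfs
  · simp only [List.map_cons, List.sum_cons, hsum]; omega
  · rw [concatList, ← hrest]
    exact hA.eq_diagOf_union_shiftArcs (fun s hs => not_not.1 (Nat.find_min hex hs))
      (Nat.find_spec hex)

end IsShortArcDiagram

theorem arc_diagram_decomposition_general (n : ℕ) (A : Finset (ℕ × ℕ))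
    (hvalid : ∀ p ∈ A, p.1 < p.2 ∧ p.2 < n ∧ p.2 - p.1 ≤ 2)
    (hleft : ∀ p ∈ A, ∀ q ∈ A, p.2 = q.2 → p = q) :
    ∃! fs : List (Bool × ℕ),
      (∀ f ∈ fs, 1 ≤ f.2) ∧ (fs.map Prod.snd).sum = n - 1 ∧ A = concatList fs := by
  obtain ⟨fs, hfs, hsum, rfl⟩ := (IsShortArcDiagram.mk hvalid hleft).exists_concatList_eq
  exact ⟨fs, ⟨hfs, hsum, rfl⟩, fun gs ⟨hgs, hsum', h⟩ =>
    eq_of_concatList_eq hgs hfs (hsum'.trans hsum.symm) h.symm⟩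

/-- Every arc diagram on `n ≥ 2` vertices in which every vertex has at most one left
arc and every arc has length 1 or 2 decomposes uniquely as a concatenation of
interlacing diagrams `L_m` and interconnecting diagrams `C_m` of lengths `m ≥ 1`. -/
theorem arc_diagram_decomposition (n : ℕ) (hn : 2 ≤ n) (A : Finset (ℕ × ℕ))
    (hvalid : ∀ p ∈ A, p.1 < p.2 ∧ p.2 < n ∧ p.2 - p.1 ≤ 2)
    (hleft : ∀ p ∈ A, ∀ q ∈ A, p.2 = q.2 → p = q) :
    ∃! fs : List (Bool × ℕ),
      (∀ f ∈ fs, 1 ≤ f.2) ∧ (fs.map Prod.snd).sum = n - 1 ∧ A = concatList fs :=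
  arc_diagram_decomposition_general n A hvalid hleft
end

section
/- If D' = A · B is a concatenation of tic-marked arc diagrams and D' satisfies all five fixed-point conditions FP1–FP5 (in particular has no tic marks), then A also satisfies all five fixed-point conditions; in particular, in any concatenation factorization of a fixed point, every left factor is a fixed point. -/
/-- A factor in the (unique) decomposition of a decorated arc diagram into interlacing
(`isC = false`, i.e. `L_{len}`) and interconnecting (`isC = true`, i.e. `C_{len}`)
diagrams.  `star` records the `s`-value: the star of the connected component ending at
the right end of the factor sits on the `star`-th right-most vertex of that component.
`tics` is the number of tic marks on the factor's arcs. -/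
structure Factor where
  isC : Bool
  len : ℕ
  star : ℕ
  tics : ℕ

/-- Whether a factor is an interlacing diagram of length one. -/
def isL1 (f : Factor) : Bool := !f.isC && f.len == 1

/-- The sections of a diagram: the maximal runs of factors containing no `L₁`
(the `L₁` factors break the diagram into sections). -/
def sections (fs : List Factor) : List (List Factor) := fs.splitOnP isL1

/-- The IC-condition for a section: it starts with two consecutive interconnecting
diagrams (of positive length). -/
def ICcond (s : List Factor) : Prop :=
  ∃ f g rest, s = f :: g :: rest ∧ f.isC = true ∧ g.isC = true

/-- FP1: all sections satisfy the IC-condition, except the right-most one, which may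
instead be a single IC diagram (or a single vertex). -/
def FP1 (fs : List Factor) : Prop :=
  (∀ s ∈ (sections fs).dropLast, ICcond s) ∧
  (ICcond ((sections fs).getLastD []) ∨ (sections fs).getLastD [] = [] ∨
    ∃ f, (sections fs).getLastD [] = [f] ∧ f.isC = true)

/-- FP2: every interlacing diagram of odd length ending before the last vertex has
`s ≠ 1`. -/
def FP2 (fs : List Factor) : Prop :=
  ∀ i f, fs[i]? = some f → i + 1 < fs.length → f.isC = false → f.len % 2 = 1 →
    f.star ≠ 1

/-- FP3: every interlacing diagram followed by another interlacing diagram has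
`s ≠ 1`. -/
def FP3 (fs : List Factor) : Prop :=
  ∀ i f g, fs[i]? = some f → fs[i + 1]? = some g → f.isC = false → g.isC = false →
    f.star ≠ 1

/-- FP4: every interlacing diagram of odd length has `s ≠ 2`. -/
def FP4 (fs : List Factor) : Prop :=
  ∀ f ∈ fs, f.isC = false → f.len % 2 = 1 → f.star ≠ 2

/-- The factor at index `i` is one of the first two interconnecting diagrams in its
section. -/
def firstTwoIC (fs : List Factor) (i : ℕ) : Prop :=
  ∃ st, st ≤ i ∧ (st = 0 ∨ ∃ e, fs[st - 1]? = some e ∧ st ≠ 0 ∧ isL1 e = true) ∧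
    (∀ j f, st ≤ j → j ≤ i → fs[j]? = some f → isL1 f = false) ∧
    ((fs.take i).drop st).countP (fun f => f.isC) ≤ 1

/-- FP5: whenever a `C_m` is immediately followed by an odd-length interlacing diagram,
the latter has `s ≠ 3`, unless `C_m` is immediately preceded by an interlacing diagram
with `s = 1` or `C_m` is one of the first two IC diagrams in its section. -/
def FP5 (fs : List Factor) : Prop :=
  ∀ i f g, fs[i]? = some f → fs[i + 1]? = some g → f.isC = true → g.isC = false →
    g.len % 2 = 1 → g.star = 3 →
    ((∃ e, 1 ≤ i ∧ fs[i - 1]? = some e ∧ e.isC = false ∧ e.star = 1) ∨ firstTwoIC fs i)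

/-- A fixed point: no tic marks, and the conditions FP1–FP5 hold. -/
def FixedPoint (fs : List Factor) : Prop :=
  (∀ f ∈ fs, f.tics = 0) ∧ FP1 fs ∧ FP2 fs ∧ FP3 fs ∧ FP4 fs ∧ FP5 fs

/-- Indexing a prefix. -/
lemma getElem?_append_of_some {A B : List Factor} {i : ℕ} {f : Factor}
    (h : A[i]? = some f) : (A ++ B)[i]? = some f := by
  have hi : i < A.length := by
    rcases List.getElem?_eq_some_iff.1 h with ⟨hi, -⟩; exact hi
  rw [List.getElem?_append_left hi]; exact h

lemma lt_length_of_getElem? {A : List Factor} {i : ℕ} {f : Factor}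
    (h : A[i]? = some f) : i < A.length := by
  rcases List.getElem?_eq_some_iff.1 h with ⟨hi, -⟩; exact hi

/-- `splitOnP` of an append: the last chunk of the left part gets extended. -/
lemma splitOnP_append_ex (p : Factor → Bool) (A B : List Factor) :
    ∃ C rest, (A ++ B).splitOnP p =
      (A.splitOnP p).dropLast ++ ((A.splitOnP p).getLastD [] ++ C) :: rest := by
  induction A with
  | nil =>
    obtain ⟨c, rest, h⟩ := List.exists_cons_of_ne_nil (List.splitOnP_ne_nil p B)
    exact ⟨c, rest, by simp [List.splitOnP_nil, h]⟩
  | cons x A ih =>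
    obtain ⟨C, rest, ih⟩ := ih
    obtain ⟨s0, s'', hS⟩ := List.exists_cons_of_ne_nil (List.splitOnP_ne_nil p A)
    rw [List.cons_append, List.splitOnP_cons, List.splitOnP_cons]
    by_cases hx : p x
    · refine ⟨C, rest, ?_⟩
      rw [if_pos hx, if_pos hx, ih, hS]
      cases s'' with
      | nil => simp [List.getLastD_cons]
      | cons t0 t' => simp [List.getLastD_cons]
    · refine ⟨C, rest, ?_⟩
      rw [if_neg hx, if_neg hx, ih, hS]
      cases s'' with
      | nil => simp [List.getLastD_cons]
      | cons t0 t' => simp [List.getLastD_cons]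

/-- The last-section condition of `FP1` passes to prefixes. -/
lemma last_section_prefix {Lst C : List Factor}
    (h : ICcond (Lst ++ C) ∨ Lst ++ C = [] ∨ ∃ f, Lst ++ C = [f] ∧ f.isC = true) :
    ICcond Lst ∨ Lst = [] ∨ ∃ f, Lst = [f] ∧ f.isC = true := by
  match Lst with
  | [] => exact Or.inr (Or.inl rfl)
  | [a] =>
    refine Or.inr (Or.inr ⟨a, rfl, ?_⟩)
    rcases h with ⟨f, g, r, he, hf, hg⟩ | he | ⟨f, he, hf⟩
    · simp only [List.singleton_append, List.cons.injEq] at he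
      rw [he.1]; exact hf
    · simp at he
    · simp only [List.singleton_append] at he
      obtain ⟨rfl, -⟩ := List.cons.inj he
      exact hf
  | a :: b :: l =>
    left
    rcases h with ⟨f, g, r, he, hf, hg⟩ | he | ⟨f, he, hf⟩
    · simp only [List.cons_append, List.cons.injEq] at he
      exact ⟨a, b, l, rfl, he.1 ▸ hf, he.2.1 ▸ hg⟩
    · simp at he
    · have := congrArg List.length he
      simp at this

theorem fixedPoint_left_factor' : True := trivial

/-- If a concatenation `A · B` is a fixed point (satisfies FP1–FP5, in particular has
no tic marks), then the left factor `A` is a fixed point. -/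
theorem fixedPoint_left_factor (A B : List Factor)
    (hlen : ∀ f ∈ A ++ B, 1 ≤ f.len)
    (hfix : FixedPoint (A ++ B)) : FixedPoint A := by
  obtain ⟨htics, h1, h2, h3, h4, h5⟩ := hfix
  obtain ⟨C, rest, hsec⟩ := splitOnP_append_ex isL1 A B
  have hsecAB : sections (A ++ B) =
      (sections A).dropLast ++ (((sections A).getLastD [] ++ C) :: rest) := hsec
  refine ⟨fun f hf => htics f (List.mem_append_left _ hf), ?_, ?_, ?_, ?_, ?_⟩
  · -- FP1
    obtain ⟨h1a, h1b⟩ := h1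
    constructor
    · intro s hs
      apply h1a
      rw [hsecAB]
      cases rest with
      | nil =>
        rw [List.dropLast_concat]
        exact hs
      | cons r0 r' =>
        rw [List.dropLast_append_cons]
        exact List.mem_append_left _ hs
    · apply last_section_prefix (C := C)
      cases rest with
      | nil =>
        have : (sections (A ++ B)).getLastD [] = (sections A).getLastD [] ++ C := by
          rw [hsecAB]
          simp [List.getLastD_eq_getLast?, List.getLast?_concat]
        rw [this] at h1b
        exact h1b
      | cons r0 r' =>
        left
        apply h1a
        rw [hsecAB, List.dropLast_append_cons]
        refine List.mem_append_right _ ?_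
        cases r' with
        | nil => simp
        | cons u u' => simp [List.dropLast_cons₂]
  · -- FP2
    intro i f hif hlt hC hodd
    refine h2 i f (getElem?_append_of_some hif) ?_ hC hodd
    rw [List.length_append]; omega
  · -- FP3
    intro i f g hif hig hf hg
    exact h3 i f g (getElem?_append_of_some hif) (getElem?_append_of_some hig) hf hg
  · -- FP4
    intro f hf
    exact h4 f (List.mem_append_left _ hf)
  · -- FP5
    intro i f g hif hig hC hgC hodd hs3
    have hi1 : i + 1 < A.length := lt_length_of_getElem? hig
    have := h5 i f g (getElem?_append_of_some hif) (getElem?_append_of_some hig)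
      hC hgC hodd hs3
    rcases this with ⟨e, h1i, he, heC, hes⟩ | ⟨st, hst, hst0, hnoL1, hcnt⟩
    · refine Or.inl ⟨e, h1i, ?_, heC, hes⟩
      rw [← he, List.getElem?_append_left]; omega
    · refine Or.inr ⟨st, hst, ?_, ?_, ?_⟩
      · rcases hst0 with h0 | ⟨e, he, hne, heL⟩
        · exact Or.inl h0
        · refine Or.inr ⟨e, ?_, hne, heL⟩
          rw [← he, List.getElem?_append_left]; omega
      · intro j f' hstj hji hjf
        exact hnoL1 j f' hstj hji (getElem?_append_of_some hjf)
      · have htake : (A ++ B).take i = A.take i := by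
          rw [List.take_append]
          have : i - A.length = 0 := by omega
          simp [this]
        rw [htake] at hcnt
        exact hcnt
end
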